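/- Let A ∈ Sp(2n) over F₂ and suppose for some r ≤ n and injective β : [r] → [2n], A satisfies A e_{β(i)} = e_i and e_i^T A = e_{β(i)}^T for all i ∈ [r]. Then β is qubit-injective, and additionally A e_{2n+1−β(i)} = e_{2n+1−i} and e_{2n+1−i}^T A = e_{2n+1−β(i)}^T for all i ∈ [r]. -/

import Mathlib

/-
Since `Aᵀ J A = J`, `A` is invertible with `A⁻¹ = J Aᵀ J`, so also `A J Aᵀ = J`. Hence the two
hypotheses transfer through `J`, which swaps `e_i` and `e_{rev i}`: `Aᵀ e_i = e_{β i}` gives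
`A e_{rev (β i)} = A J Aᵀ e_i = J e_i = e_{rev i}`, and dually for rows. If `β k` and `β l` sat on
the same qubit without being equal, then `β k = rev (β l)`, so `e_k = A e_{β k} = e_{rev l}`;
this is impossible since `k, l < r ≤ n` lie in the same half of `[2n]`.
-/

open Matrix

/-- The `2n × 2n` reverse diagonal matrix over `F₂`. -/
def Jmat (n : ℕ) : Matrix (Fin (2 * n)) (Fin (2 * n)) (ZMod 2) :=
  Matrix.of fun i j => if j = i.rev then 1 else 0

/-- The symplectic group `Sp(2n)` over `F₂` with respect to the form `xᵀ J y`. -/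
def Sp (n : ℕ) : Set (Matrix (Fin (2 * n)) (Fin (2 * n)) (ZMod 2)) :=
  {C | Cᵀ * Jmat n * C = Jmat n}

/-- `q(i) = min(i, 2n+1−i)`: the qubit on which index `i` acts (0-based via `Fin.rev`). -/
def qb {n : ℕ} (i : Fin (2 * n)) : ℕ := min (i : ℕ) (i.rev : ℕ)

lemma Pi.single_one_left_injective {ι R : Type*} [DecidableEq ι] [Zero R] [One R] [NeZero (1 : R)] :
    Function.Injective fun i : ι => (Pi.single i 1 : ι → R) := by
  intro i j h
  by_contra hij
  simpa [Pi.single_eq_of_ne hij] using congrFun h i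

lemma Fin.ne_rev_of_lt_of_lt {n : ℕ} {i j : Fin (2 * n)} (hi : (i : ℕ) < n) (hj : (j : ℕ) < n) :
    i ≠ j.rev := by
  intro h
  have := congrArg Fin.val h
  rw [Fin.val_rev] at this
  omega

lemma qb_eq_qb_iff {n : ℕ} {i j : Fin (2 * n)} : qb i = qb j ↔ i = j ∨ i = j.rev := by
  have := i.isLt
  have := j.isLt
  simp only [qb, Fin.ext_iff, Fin.val_rev]
  omega

lemma Jmat_apply {n : ℕ} (i j : Fin (2 * n)) : Jmat n i j = if j = i.rev then 1 else 0 := rfl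

lemma Jmat_transpose (n : ℕ) : (Jmat n)ᵀ = Jmat n := by
  ext i j
  simp only [transpose_apply, Jmat_apply, eq_comm (a := j), Fin.rev_eq_iff]

lemma Jmat_mulVec_single (n : ℕ) (j : Fin (2 * n)) :
    Jmat n *ᵥ Pi.single j 1 = Pi.single j.rev 1 := by
  ext i
  simp [mulVec, Jmat_apply, Pi.single_apply, eq_comm (a := j), Fin.rev_eq_iff]

lemma single_vecMul_Jmat (n : ℕ) (j : Fin (2 * n)) :
    Pi.single j 1 ᵥ* Jmat n = Pi.single j.rev 1 := by
  rw [← Jmat_transpose, vecMul_transpose, Jmat_mulVec_single]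

lemma Jmat_mul_self (n : ℕ) : Jmat n * Jmat n = 1 := by
  ext i j
  rw [mul_apply, Finset.sum_eq_single i.rev]
  · simp [Jmat_apply, one_apply, eq_comm (a := j)]
  · intro k _ hk
    simp [Jmat_apply, hk]
  · simp

lemma mul_Jmat_mul_transpose_of_mem_Sp {n : ℕ} {A : Matrix (Fin (2 * n)) (Fin (2 * n)) (ZMod 2)}
    (hA : A ∈ Sp n) : A * Jmat n * Aᵀ = Jmat n := by
  have hleft : (Jmat n * Aᵀ * Jmat n) * A = 1 := by
    rw [Matrix.mul_assoc, Matrix.mul_assoc, ← Matrix.mul_assoc Aᵀ, hA, Jmat_mul_self]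
  have hright : A * (Jmat n * Aᵀ * Jmat n) = 1 := mul_eq_one_comm.mp hleft
  calc A * Jmat n * Aᵀ = A * (Jmat n * Aᵀ * Jmat n) * Jmat n := by
        simp only [Matrix.mul_assoc, Jmat_mul_self, Matrix.mul_one]
    _ = Jmat n := by rw [hright, Matrix.one_mul]

section Sp

variable {n : ℕ} {A : Matrix (Fin (2 * n)) (Fin (2 * n)) (ZMod 2)} {i j : Fin (2 * n)}

lemma mulVec_single_rev_of_mem_Sp (hA : A ∈ Sp n) (h : Pi.single i 1 ᵥ* A = Pi.single j 1) :
    A *ᵥ Pi.single j.rev 1 = Pi.single i.rev 1 :=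
  calc A *ᵥ Pi.single j.rev 1 = A *ᵥ (Jmat n *ᵥ (Aᵀ *ᵥ Pi.single i 1)) := by
        rw [mulVec_transpose, h, Jmat_mulVec_single]
    _ = Pi.single i.rev 1 := by
        rw [mulVec_mulVec, mulVec_mulVec, mul_Jmat_mul_transpose_of_mem_Sp hA, Jmat_mulVec_single]

lemma single_rev_vecMul_of_mem_Sp (hA : A ∈ Sp n) (h : A *ᵥ Pi.single j 1 = Pi.single i 1) :
    Pi.single i.rev 1 ᵥ* A = Pi.single j.rev 1 :=
  calc Pi.single i.rev 1 ᵥ* A = Pi.single j 1 ᵥ* Aᵀ ᵥ* Jmat n ᵥ* A := by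
        rw [vecMul_transpose, h, single_vecMul_Jmat]
    _ = Pi.single j.rev 1 := by
        rw [vecMul_vecMul, vecMul_vecMul, ← Matrix.mul_assoc, hA, single_vecMul_Jmat]

end Sp

theorem stmt_18 {n r : ℕ} (hr : r ≤ n)
    (A : Matrix (Fin (2 * n)) (Fin (2 * n)) (ZMod 2)) (hA : A ∈ Sp n)
    (β : Fin r → Fin (2 * n)) (hβ : Function.Injective β)
    (hcol : ∀ i : Fin r,
      A.mulVec (Pi.single (β i) 1) = Pi.single (Fin.castLE (by omega) i) 1)
    (hrow : ∀ i : Fin r,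
      Matrix.vecMul (Pi.single (Fin.castLE (by omega : r ≤ 2 * n) i) 1) A
        = Pi.single (β i) 1) :
    (Function.Injective fun k => qb (β k)) ∧
    (∀ i : Fin r,
      A.mulVec (Pi.single (β i).rev 1)
          = Pi.single (Fin.castLE (by omega : r ≤ 2 * n) i).rev 1 ∧
      Matrix.vecMul (Pi.single (Fin.castLE (by omega : r ≤ 2 * n) i).rev 1) A
          = Pi.single (β i).rev 1) := by
  have hrev := fun i : Fin r =>
    And.intro (mulVec_single_rev_of_mem_Sp hA (hrow i)) (single_rev_vecMul_of_mem_Sp hA (hcol i))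
  refine ⟨fun k l hkl => ?_, hrev⟩
  rcases qb_eq_qb_iff.mp hkl with heq | hkl_rev
  · exact hβ heq
  · have hsingle := (hcol k).symm.trans (hkl_rev ▸ (hrev l).1)
    exact absurd (Pi.single_one_left_injective hsingle)
      (Fin.ne_rev_of_lt_of_lt (by rw [Fin.val_castLE]; omega) (by rw [Fin.val_castLE]; omega))
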